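/- arXiv:1705.10145 — 2 statements merged into one kernel-verified Lean document; each statement's English description precedes it below -/
import Mathlib

section
/- For any linear relation (V,C), one has C^♯ ∩ C C^♭ = C^♭, where C C^♭ = ⋃_{u ∈ C^♭} Cu. -/
variable {K : Type*} [Field K]

section Defs
variable {V : Type*} [AddCommGroup V] [Module K V]

/-- A ℤ-indexed chain through the relation `C`. -/
def IsCChain (C : Submodule K (V × V)) (f : ℤ → V) : Prop :=
  ∀ n : ℤ, (f n, f (n + 1)) ∈ C

/-- `C^♯`: elements lying on a bi-infinite chain. -/
def csharp (C : Submodule K (V × V)) : Set V :=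
  {v | ∃ f : ℤ → V, IsCChain C f ∧ f 0 = v}

/-- `C₊`: elements lying on a bi-infinite chain which is eventually zero to the right. -/
def cplus (C : Submodule K (V × V)) : Set V :=
  {v | ∃ f : ℤ → V, IsCChain C f ∧ f 0 = v ∧ ∃ N : ℤ, ∀ n ≥ N, f n = 0}

/-- `C₋`: elements lying on a bi-infinite chain which is eventually zero to the left. -/
def cminus (C : Submodule K (V × V)) : Set V :=
  {v | ∃ f : ℤ → V, IsCChain C f ∧ f 0 = v ∧ ∃ N : ℤ, ∀ n ≤ N, f n = 0}

/-- `C^♭ = C₊ + C₋`. -/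
def cflat (C : Submodule K (V × V)) : Set V :=
  {v | ∃ a ∈ cplus C, ∃ b ∈ cminus C, v = a + b}

end Defs

/-! If `v ∈ C^♯` is a successor of `a + b` with `a ∈ C₊` and `b ∈ C₋`, pick chains `f` through `a`
and `h` through `v`. Then `v = f 1 + (v - f 1)`, where `f 1 ∈ C₊`, and `v - f 1` lies on the chain
`h - f (· + 1)` and is a successor of `b`; prepending the past of `b` to this chain shows
`v - f 1 ∈ C₋`. Conversely, for `v = f 0 + g 0 ∈ C^♭` the sum `f + g` is a chain through `v`, and
`f (-1) + g (-1) ∈ C^♭` is a predecessor of `v`. -/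

namespace IsCChain

variable {V : Type*} [AddCommGroup V] [Module K V] {C : Submodule K (V × V)} {f g : ℤ → V}

theorem add (hf : IsCChain C f) (hg : IsCChain C g) : IsCChain C (f + g) :=
  fun n => C.add_mem (hf n) (hg n)

theorem sub (hf : IsCChain C f) (hg : IsCChain C g) : IsCChain C (f - g) :=
  fun n => C.sub_mem (hf n) (hg n)

theorem comp_add_right (hf : IsCChain C f) (k : ℤ) : IsCChain C (fun n => f (n + k)) :=
  fun n => by simpa only [add_right_comm n 1 k] using hf (n + k)

theorem piecewise_neg (hf : IsCChain C f) (hg : IsCChain C g) (h : (f (-1), g 0) ∈ C) :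
    IsCChain C (fun n => if n < 0 then f n else g n) := by
  intro n
  rcases lt_trichotomy n (-1) with hn | rfl | hn
  · simpa [show n < 0 by omega, show n + 1 < 0 by omega] using hf n
  · simpa using h
  · simpa [show ¬n < 0 by omega, show ¬n + 1 < 0 by omega] using hg n

theorem apply_mem_csharp (hf : IsCChain C f) (k : ℤ) : f k ∈ csharp C :=
  ⟨_, hf.comp_add_right k, by simp⟩

theorem apply_mem_cplus (hf : IsCChain C f) {N : ℤ} (hN : ∀ n ≥ N, f n = 0) (k : ℤ) :
    f k ∈ cplus C :=
  ⟨_, hf.comp_add_right k, by simp, N - k, fun n hn => hN _ (by omega)⟩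

theorem apply_mem_cminus (hf : IsCChain C f) {N : ℤ} (hN : ∀ n ≤ N, f n = 0) (k : ℤ) :
    f k ∈ cminus C :=
  ⟨_, hf.comp_add_right k, by simp, N - k, fun n hn => hN _ (by omega)⟩

end IsCChain

section

variable {V : Type*} [AddCommGroup V] [Module K V] {C : Submodule K (V × V)}

theorem mem_cminus_of_mem_of_mem_csharp {b w : V} (hb : b ∈ cminus C) (hw : w ∈ csharp C)
    (hbw : (b, w) ∈ C) : w ∈ cminus C := by
  obtain ⟨g, hg, rfl, N, hN⟩ := hb
  obtain ⟨h, hh, rfl⟩ := hw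
  refine ⟨_, (hg.comp_add_right 1).piecewise_neg hh (by simpa using hbw), by simp,
    min N 0 - 1, fun n hn => ?_⟩
  simpa [show n < 0 by omega] using hN (n + 1) (by omega)

theorem cflat_subset_csharp : cflat C ⊆ csharp C := by
  rintro _ ⟨_, ⟨f, hf, rfl, -⟩, _, ⟨g, hg, rfl, -⟩, rfl⟩
  exact (hf.add hg).apply_mem_csharp 0

theorem exists_mem_cflat_mem_of_mem_cflat {v : V} (hv : v ∈ cflat C) :
    ∃ u ∈ cflat C, (u, v) ∈ C := by
  obtain ⟨_, ⟨f, hf, rfl, M, hM⟩, _, ⟨g, hg, rfl, N, hN⟩, rfl⟩ := hv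
  exact ⟨f (-1) + g (-1), ⟨_, hf.apply_mem_cplus hM (-1), _, hg.apply_mem_cminus hN (-1), rfl⟩,
    by simpa using (hf.add hg) (-1)⟩

theorem mem_cflat_of_mem_csharp_of_mem {u v : V} (hv : v ∈ csharp C) (hu : u ∈ cflat C)
    (huv : (u, v) ∈ C) : v ∈ cflat C := by
  obtain ⟨h, hh, rfl⟩ := hv
  obtain ⟨_, ⟨f, hf, rfl, M, hM⟩, b, hb, rfl⟩ := hu
  have hstep : (b, h 0 - f 1) ∈ C := by simpa using C.sub_mem huv (hf 0)
  have hrest : h 0 - f 1 ∈ csharp C := by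
    simpa using (hh.sub (hf.comp_add_right 1)).apply_mem_csharp 0
  exact ⟨f 1, hf.apply_mem_cplus hM 1, _, mem_cminus_of_mem_of_mem_csharp hb hrest hstep,
    by abel⟩

end

/-- `C^♯ ∩ C C^♭ = C^♭`, where `C C^♭ = ⋃_{u ∈ C^♭} Cu`. -/
theorem sharp_inter_step_flat_eq_flat
    {V : Type*} [AddCommGroup V] [Module K V] (C : Submodule K (V × V)) :
    csharp C ∩ {v | ∃ u ∈ cflat C, (u, v) ∈ C} = cflat C := by
  ext v
  constructor
  · rintro ⟨hv, u, hu, huv⟩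
    exact mem_cflat_of_mem_csharp_of_mem hv hu huv
  · intro hv
    exact ⟨cflat_subset_csharp hv, exists_mem_cflat_mem_of_mem_cflat hv⟩
end

section
/- Let 0 → (V₁,C₁) → (V₂,C₂) → (V₃,C₃) → 0 be an exact sequence of linear relations. If C₁^♭ = V₁ and C₃^♭ = V₃, then C₂^♭ = V₂. -/
/-!
Both `C₊` and `C₋` are subspaces, and reversing chains shows `C₊ = (C⁻¹)₋`, so
`C^♭ = (C⁻¹)₋ + C₋` and only `C₋` needs to be studied. A morphism of relations maps `C₋` into
`C₋`. Conversely, if `C₁` is total then every element of `(C₃)₋` lifts to `(C₂)₋`: its chain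
can be lifted step by step starting from the zero tail, since exactness lets each step start
at whatever lift was reached so far. Applied to `C` and `C⁻¹` (the hypothesis `C₁^♭ = V₁`
makes `C₁` total and surjective), this shows that `S = C₂^♭` contains `f(V₁) = ker g` and
that `g(S) ⊇ C₃^♭ = V₃`; hence `S = V₂`.
-/

variable {K : Type*} [Field K]

section Exact
variable {V₁ V₂ V₃ : Type*} [AddCommGroup V₁] [Module K V₁]
  [AddCommGroup V₂] [Module K V₂] [AddCommGroup V₃] [Module K V₃]
  (C₁ : Submodule K (V₁ × V₁)) (C₂ : Submodule K (V₂ × V₂)) (C₃ : Submodule K (V₃ × V₃))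
  (f : V₁ →ₗ[K] V₂) (g : V₂ →ₗ[K] V₃)

/-- `0 → (V₁,C₁) → (V₂,C₂) → (V₃,C₃) → 0` is an exact sequence of linear relations:
both the sequence of underlying spaces and the sequence of relation subspaces are exact. -/
def IsExactSeqOfRelations : Prop :=
  Function.Injective f ∧ Function.Surjective g ∧ LinearMap.range f = LinearMap.ker g ∧
  (∀ p ∈ C₁, (f p.1, f p.2) ∈ C₂) ∧ (∀ p ∈ C₂, (g p.1, g p.2) ∈ C₃) ∧
  (∀ p ∈ C₃, ∃ q ∈ C₂, (g q.1, g q.2) = p) ∧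
  (∀ q ∈ C₂, (g q.1, g q.2) = (0 : V₃ × V₃) → ∃ p ∈ C₁, (f p.1, f p.2) = q)

end Exact

lemma Nat.exists_seq_of_forall_exists {α : Type*} {P : ℕ → α → Prop} {R : α → α → Prop}
    (step : ∀ k x, P k x → ∃ y, R x y ∧ P (k + 1) y) {x₀ : α} (h₀ : P 0 x₀) :
    ∃ u : ℕ → α, u 0 = x₀ ∧ ∀ k, P k (u k) ∧ R (u k) (u (k + 1)) := by
  choose next hnext using step
  let u : ∀ k, {x // P k x} := fun k =>
    Nat.rec ⟨x₀, h₀⟩ (fun k x => ⟨next k x x.2, (hnext k x x.2).2⟩) k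
  exact ⟨fun k => (u k).1, rfl, fun k => ⟨(u k).2, (hnext k _ (u k).2).1⟩⟩

section Relation
variable {V : Type*} [AddCommGroup V] [Module K V] {C : Submodule K (V × V)}

/-- The inverse relation `C⁻¹ = {(y, x) | (x, y) ∈ C}`. -/
def relInv (C : Submodule K (V × V)) : Submodule K (V × V) :=
  C.comap (LinearEquiv.prodComm K V V).toLinearMap

@[simp]
lemma mem_relInv {p : V × V} : p ∈ relInv C ↔ (p.2, p.1) ∈ C := Iff.rfl

lemma IsCChain.relInv_comp_neg {c : ℤ → V} (hc : IsCChain C c) :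
    IsCChain (relInv C) (fun n => c (-n)) := by
  intro n
  simpa [neg_add_eq_sub, sub_add_cancel] using hc (-n - 1)

lemma cplus_subset_cminus_relInv : cplus C ⊆ cminus (relInv C) := by
  rintro v ⟨c, hc, rfl, N, hN⟩
  exact ⟨_, hc.relInv_comp_neg, by simp, -N, fun n hn => hN _ (by omega)⟩

lemma cminus_subset_cplus_relInv : cminus C ⊆ cplus (relInv C) := by
  rintro v ⟨c, hc, rfl, N, hN⟩
  exact ⟨_, hc.relInv_comp_neg, by simp, -N, fun n hn => hN _ (by omega)⟩

lemma cplus_eq_cminus_relInv : cplus C = cminus (relInv C) :=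
  cplus_subset_cminus_relInv.antisymm fun _ hv =>
    (cminus_subset_cplus_relInv hv : _ ∈ cplus (relInv (relInv C)))

lemma exists_mem_of_mem_cminus {v : V} (hv : v ∈ cminus C) :
    (∃ y, (v, y) ∈ C) ∧ ∃ x, (x, v) ∈ C := by
  obtain ⟨c, hc, rfl, -⟩ := hv
  exact ⟨⟨c 1, hc 0⟩, c (-1), by simpa using hc (-1)⟩

lemma exists_mem_of_cflat_eq_univ (hC : cflat C = Set.univ) (v : V) :
    (∃ y, (v, y) ∈ C) ∧ ∃ x, (x, v) ∈ C := by
  obtain ⟨a, ha, b, hb, rfl⟩ : v ∈ cflat C := hC ▸ Set.mem_univ v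
  rw [cplus_eq_cminus_relInv] at ha
  obtain ⟨⟨ya, hya⟩, xa, hxa⟩ := exists_mem_of_mem_cminus ha
  obtain ⟨⟨yb, hyb⟩, xb, hxb⟩ := exists_mem_of_mem_cminus hb
  exact ⟨⟨xa + yb, C.add_mem hxa hyb⟩, ya + xb, C.add_mem hya hxb⟩

lemma mem_cminus_of_seq {u : ℕ → V} (hu₀ : u 0 = 0) (hu : ∀ k, (u k, u (k + 1)) ∈ C) (k : ℕ) :
    u k ∈ cminus C := by
  refine ⟨fun n => u (n + k).toNat, fun n => ?_, by simp, -k, fun n hn => ?_⟩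
  · rcases lt_or_ge (n + k) 0 with hn | hn
    · simp only [Int.toNat_eq_zero.2 hn.le, Int.toNat_eq_zero.2 (by omega : n + 1 + k ≤ 0), hu₀]
      exact C.zero_mem
    · simpa [show (n + 1 + k).toNat = (n + k).toNat + 1 by omega] using hu (n + k).toNat
  · simp [Int.toNat_eq_zero.2 (by omega : n + k ≤ 0), hu₀]

lemma exists_seq_of_mem_cminus {v : V} (hv : v ∈ cminus C) :
    ∃ u : ℕ → V, u 0 = 0 ∧ (∀ k, (u k, u (k + 1)) ∈ C) ∧ ∃ k, u k = v := by
  obtain ⟨c, hc, rfl, N, hN⟩ := hv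
  refine ⟨fun k => c (min N 0 + k), by simpa using hN _ (min_le_left N 0), fun k => ?_,
    (-min N 0).toNat, congrArg c (by omega)⟩
  simpa [add_assoc] using hc (min N 0 + k)

def cminusSubmodule (C : Submodule K (V × V)) : Submodule K V where
  carrier := cminus C
  zero_mem' := ⟨0, fun _ => C.zero_mem, rfl, 0, fun _ _ => rfl⟩
  add_mem' := by
    rintro _ _ ⟨c, hc, rfl, M, hM⟩ ⟨d, hd, rfl, N, hN⟩
    refine ⟨c + d, fun n => C.add_mem (hc n) (hd n), rfl, min M N, fun n hn => ?_⟩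
    simp [hM n (hn.trans (min_le_left _ _)), hN n (hn.trans (min_le_right _ _))]
  smul_mem' := by
    rintro a _ ⟨c, hc, rfl, N, hN⟩
    exact ⟨a • c, fun n => C.smul_mem a (hc n), rfl, N, fun n hn => by simp [hN n hn]⟩

lemma cflat_eq_univ_iff :
    cflat C = Set.univ ↔ cminusSubmodule (relInv C) ⊔ cminusSubmodule C = ⊤ := by
  suffices cflat C = (cminusSubmodule (relInv C) ⊔ cminusSubmodule C : Submodule K V) by
    rw [this, Submodule.coe_eq_univ]
  ext v
  simp only [cflat, cplus_eq_cminus_relInv, SetLike.mem_coe, Submodule.mem_sup, eq_comm]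
  rfl

end Relation

section Exact
variable {V₁ V₂ V₃ : Type*} [AddCommGroup V₁] [Module K V₁]
  [AddCommGroup V₂] [Module K V₂] [AddCommGroup V₃] [Module K V₃]
  {C₁ : Submodule K (V₁ × V₁)} {C₂ : Submodule K (V₂ × V₂)} {C₃ : Submodule K (V₃ × V₃)}
  {f : V₁ →ₗ[K] V₂} {g : V₂ →ₗ[K] V₃}

lemma map_cminusSubmodule_le (hf : ∀ p ∈ C₁, (f p.1, f p.2) ∈ C₂) :
    (cminusSubmodule C₁).map f ≤ cminusSubmodule C₂ := by
  rintro _ ⟨_, ⟨c, hc, rfl, N, hN⟩, rfl⟩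
  exact ⟨f ∘ c, fun n => hf _ (hc n), rfl, N, fun n hn => by simp [hN n hn]⟩

/-- The discrepancy between `x` and the first entry of a lift of `(a, b)` lies in
`range f = ker g`, and is absorbed by the image of a `C₁`-step. -/
lemma exists_lift_step (hker : LinearMap.range f = LinearMap.ker g)
    (hf : ∀ p ∈ C₁, (f p.1, f p.2) ∈ C₂) (hg : ∀ p ∈ C₃, ∃ q ∈ C₂, (g q.1, g q.2) = p)
    (hC₁ : ∀ x, ∃ y, (x, y) ∈ C₁) {a b : V₃} (hab : (a, b) ∈ C₃) {x : V₂} (hx : g x = a) :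
    ∃ y, (x, y) ∈ C₂ ∧ g y = b := by
  obtain ⟨⟨x', y'⟩, hq, hgq⟩ := hg _ hab
  simp only [Prod.mk.injEq] at hgq
  obtain ⟨z, hz⟩ : x - x' ∈ LinearMap.range f := by simp [hker, hx, hgq.1]
  obtain ⟨w, hw⟩ := hC₁ z
  have hfw : g (f w) = 0 := by
    rw [← LinearMap.mem_ker, ← hker]
    exact LinearMap.mem_range_self f w
  refine ⟨y' + f w, ?_, by simp [hfw, hgq.2]⟩
  simpa [hz] using C₂.add_mem hq (hf _ hw)

lemma cminusSubmodule_le_map (hker : LinearMap.range f = LinearMap.ker g)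
    (hf : ∀ p ∈ C₁, (f p.1, f p.2) ∈ C₂) (hg : ∀ p ∈ C₃, ∃ q ∈ C₂, (g q.1, g q.2) = p)
    (hC₁ : ∀ x, ∃ y, (x, y) ∈ C₁) :
    cminusSubmodule C₃ ≤ (cminusSubmodule C₂).map g := by
  intro v hv
  obtain ⟨c, hc₀, hc, k, rfl⟩ := exists_seq_of_mem_cminus hv
  obtain ⟨u, hu₀, hu⟩ := Nat.exists_seq_of_forall_exists (P := fun k x => g x = c k)
    (R := fun x y => (x, y) ∈ C₂)
    (fun k _ hx => exists_lift_step hker hf hg hC₁ (hc k) hx) (x₀ := 0)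
    (by simp [hc₀])
  exact ⟨u k, mem_cminus_of_seq hu₀ (fun k => (hu k).2) k, (hu k).1⟩

end Exact

/-- In an exact sequence of linear relations, if `C₁^♭ = V₁` and `C₃^♭ = V₃`
then `C₂^♭ = V₂`. -/
theorem flat_of_exact
    {V₁ V₂ V₃ : Type*} [AddCommGroup V₁] [Module K V₁]
    [AddCommGroup V₂] [Module K V₂] [AddCommGroup V₃] [Module K V₃]
    (C₁ : Submodule K (V₁ × V₁)) (C₂ : Submodule K (V₂ × V₂)) (C₃ : Submodule K (V₃ × V₃))
    (f : V₁ →ₗ[K] V₂) (g : V₂ →ₗ[K] V₃)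
    (hex : IsExactSeqOfRelations C₁ C₂ C₃ f g)
    (h1 : cflat C₁ = Set.univ) (h3 : cflat C₃ = Set.univ) :
    cflat C₂ = Set.univ := by
  obtain ⟨-, -, hker, hf, -, hg, -⟩ := hex
  have hf' : ∀ p ∈ relInv C₁, (f p.1, f p.2) ∈ relInv C₂ := fun p hp => hf _ hp
  have hg' : ∀ p ∈ relInv C₃, ∃ q ∈ relInv C₂, (g q.1, g q.2) = p := fun p hp => by
    obtain ⟨q, hq, hgq⟩ := hg (p.2, p.1) hp
    exact ⟨q.swap, hq, Prod.ext (congrArg Prod.snd hgq) (congrArg Prod.fst hgq)⟩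
  have hC₁ := exists_mem_of_cflat_eq_univ h1
  rw [cflat_eq_univ_iff] at h1 h3 ⊢
  set S := cminusSubmodule (relInv C₂) ⊔ cminusSubmodule C₂
  have hker_le : LinearMap.ker g ≤ S := by
    rw [← hker, LinearMap.range_eq_map, ← h1, Submodule.map_sup]
    exact sup_le_sup (map_cminusSubmodule_le hf') (map_cminusSubmodule_le hf)
  have hmap : S.map g = ⊤ := by
    rw [eq_top_iff, ← h3, Submodule.map_sup]
    exact sup_le_sup
      (cminusSubmodule_le_map hker hf' hg' fun x => (hC₁ x).2)
      (cminusSubmodule_le_map hker hf hg fun x => (hC₁ x).1)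
  rw [← Submodule.comap_map_eq_self hker_le, hmap, Submodule.comap_top]
end
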